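/- arXiv:1102.5424 — 2 statements merged into one kernel-verified Lean document; each statement's English description precedes it below -/
import Mathlib

section
/- Let F be a filter of a basic pseudo hoop M. Then F is prime (i.e., F₁ ∩ F₂ ⊆ F implies F₁ ⊆ F or F₂ ⊆ F for all filters F₁, F₂) if and only if for all f, g ∈ M, f → g ∈ F or g → f ∈ F. -/
universe u

structure PseudoHoop (M : Type u) where
  mul : M → M → M
  one : M
  imp : M → M → M
  rimp : M → M → M
  mul_one : ∀ x, mul x one = x
  one_mul : ∀ x, mul one x = x
  imp_self : ∀ x, imp x x = one
  rimp_self : ∀ x, rimp x x = one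
  mul_imp : ∀ x y z, imp (mul x y) z = imp x (imp y z)
  mul_rimp : ∀ x y z, rimp (mul x y) z = rimp y (rimp x z)
  div1 : ∀ x y, mul (imp x y) x = mul (imp y x) y
  div2 : ∀ x y, mul (imp x y) x = mul x (rimp x y)
  div3 : ∀ x y, mul x (rimp x y) = mul y (rimp y x)

namespace PseudoHoop

variable {M : Type u} (H : PseudoHoop M)

/-- The induced order: x ≤ y iff x → y = 1. -/
def le (x y : M) : Prop := H.imp x y = H.one

/-- The derived meet: x ∧ y = (x → y) ⊙ x. -/
def meet (x y : M) : M := H.mul (H.imp x y) x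

/-- Powers: a^0 = 1, a^(n+1) = a^n ⊙ a. -/
def pow (a : M) : ℕ → M
  | 0 => H.one
  | n + 1 => H.mul (pow a n) a

/-- j is the least upper bound of x and y. -/
def IsJoin (x y j : M) : Prop :=
  H.le x j ∧ H.le y j ∧ ∀ c, H.le x c → H.le y c → H.le j c

/-- Prelinearity: (x→y) ∨ (y→x) and (x⇝y) ∨ (y⇝x) exist and equal 1. -/
def Prelinear : Prop :=
  ∀ x y, H.IsJoin (H.imp x y) (H.imp y x) H.one ∧ H.IsJoin (H.rimp x y) (H.rimp y x) H.one

/-- Basic pseudo hoop. -/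
def Basic : Prop :=
  (∀ x y z, H.le (H.imp (H.imp x y) z) (H.imp (H.imp (H.imp y x) z) z)) ∧
  (∀ x y z, H.le (H.rimp (H.rimp x y) z) (H.rimp (H.rimp (H.rimp y x) z) z))

/-- Filters: contain 1, closed under ⊙ and upward closed. -/
def IsFilter (F : Set M) : Prop :=
  H.one ∈ F ∧ (∀ x ∈ F, ∀ y ∈ F, H.mul x y ∈ F) ∧ (∀ x ∈ F, ∀ y, H.le x y → y ∈ F)

/-- Filter generated by a set. -/
def filterGen (S : Set M) : Set M := ⋂₀ {F | H.IsFilter F ∧ S ⊆ F}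

/-- Prime filter. -/
def IsPrime (F : Set M) : Prop :=
  H.IsFilter F ∧
    ∀ F₁ F₂, H.IsFilter F₁ → H.IsFilter F₂ → F₁ ∩ F₂ ⊆ F → F₁ ⊆ F ∨ F₂ ⊆ F

/-- V is a value of g: a filter maximal with respect to not containing g. -/
def IsValueOf (V : Set M) (g : M) : Prop :=
  H.IsFilter V ∧ g ∉ V ∧ ∀ W, H.IsFilter W → V ⊆ W → g ∉ W → W = V

/-- V is a value of M: a value of some g ≠ 1. -/
def IsValue (V : Set M) : Prop := ∃ g, g ≠ H.one ∧ H.IsValueOf V g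

lemma le_refl' (x : M) : H.le x x := H.imp_self x

lemma antisymm' {x y : M} (h1 : H.le x y) (h2 : H.le y x) : x = y := by
  have h := H.div1 x y
  have h1' : H.imp x y = H.one := h1
  have h2' : H.imp y x = H.one := h2
  rw [h1', h2', H.one_mul, H.one_mul] at h
  exact h

lemma imp_one_absorb (x z : M) : H.imp x (H.imp H.one z) = H.imp x z := by
  rw [← H.mul_imp, H.mul_one]

lemma one_imp (z : M) : H.imp H.one z = z := by
  apply H.antisymm'
  · show H.imp (H.imp H.one z) z = H.one
    rw [← H.imp_one_absorb (H.imp H.one z) z, H.imp_self]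
  · show H.imp z (H.imp H.one z) = H.one
    rw [H.imp_one_absorb, H.imp_self]

lemma imp_one (x : M) : H.imp x H.one = H.one := by
  have hx : H.mul (H.imp x H.one) x = x := by
    rw [H.div1, H.one_imp, H.mul_one]
  calc H.imp x H.one = H.imp (H.mul (H.imp x H.one) x) H.one := by rw [hx]
    _ = H.imp (H.imp x H.one) (H.imp x H.one) := by rw [H.mul_imp]
    _ = H.one := H.imp_self _

lemma rimp_antisymm {x y : M} (h1 : H.rimp x y = H.one) (h2 : H.rimp y x = H.one) :
    x = y := by
  have h := H.div3 x y
  rw [h1, h2, H.mul_one, H.mul_one] at h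
  exact h

lemma rimp_one_absorb (x z : M) : H.rimp x (H.rimp H.one z) = H.rimp x z := by
  rw [← H.mul_rimp, H.one_mul]

lemma one_rimp (z : M) : H.rimp H.one z = z := by
  apply H.rimp_antisymm
  · rw [← H.rimp_one_absorb (H.rimp H.one z) z, H.rimp_self]
  · rw [H.rimp_one_absorb, H.rimp_self]

lemma rimp_one (x : M) : H.rimp x H.one = H.one := by
  have hx : H.mul x (H.rimp x H.one) = x := by
    rw [H.div3, H.one_rimp, H.one_mul]
  calc H.rimp x H.one = H.rimp (H.mul x (H.rimp x H.one)) H.one := by rw [hx]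
    _ = H.rimp (H.rimp x H.one) (H.rimp x H.one) := by rw [H.mul_rimp]
    _ = H.one := H.rimp_self _

lemma le_iff_rimp {x y : M} : H.le x y ↔ H.rimp x y = H.one := by
  constructor
  · intro h
    have h' : H.imp x y = H.one := h
    have hx : H.mul x (H.rimp x y) = x := by
      rw [← H.div2, h', H.one_mul]
    calc H.rimp x y = H.rimp (H.mul x (H.rimp x y)) y := by rw [hx]
      _ = H.rimp (H.rimp x y) (H.rimp x y) := by rw [H.mul_rimp]
      _ = H.one := H.rimp_self _
  · intro h
    have hx : H.mul (H.imp x y) x = x := by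
      rw [H.div2, h, H.mul_one]
    show H.imp x y = H.one
    calc H.imp x y = H.imp (H.mul (H.imp x y) x) y := by rw [hx]
      _ = H.imp (H.imp x y) (H.imp x y) := by rw [H.mul_imp]
      _ = H.one := H.imp_self _

lemma res_imp {a b c : M} : H.le (H.mul a b) c ↔ H.le a (H.imp b c) := by
  show H.imp (H.mul a b) c = H.one ↔ H.imp a (H.imp b c) = H.one
  rw [H.mul_imp]

lemma res_rimp {a b c : M} : H.le (H.mul a b) c ↔ H.le b (H.rimp a c) := by
  rw [H.le_iff_rimp, H.le_iff_rimp, H.mul_rimp]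

lemma le_trans' {x y z : M} (h1 : H.le x y) (h2 : H.le y z) : H.le x z := by
  have h1' : H.imp x y = H.one := h1
  have h2' : H.imp y z = H.one := h2
  have hx : H.mul (H.imp y x) y = x := by
    rw [← H.div1, h1', H.one_mul]
  show H.imp x z = H.one
  calc H.imp x z = H.imp (H.mul (H.imp y x) y) z := by rw [hx]
    _ = H.imp (H.imp y x) (H.imp y z) := by rw [H.mul_imp]
    _ = H.imp (H.imp y x) H.one := by rw [h2']
    _ = H.one := H.imp_one _

lemma le_one' (x : M) : H.le x H.one := H.imp_one x

lemma mono_right {x y z : M} (h : H.le y z) : H.le (H.mul x y) (H.mul x z) := by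
  rw [H.res_rimp]
  exact H.le_trans' h (H.res_rimp.mp (H.le_refl' (H.mul x z)))

lemma mono_left {x y z : M} (h : H.le x z) : H.le (H.mul x y) (H.mul z y) := by
  rw [H.res_imp]
  exact H.le_trans' h (H.res_imp.mp (H.le_refl' (H.mul z y)))

lemma mul_le_left (x y : M) : H.le (H.mul x y) x := by
  have := H.mono_right (x := x) (H.le_one' y)
  rwa [H.mul_one] at this

lemma mul_le_right (x y : M) : H.le (H.mul x y) y := by
  have := H.mono_left (y := y) (H.le_one' x)
  rwa [H.one_mul] at this

lemma meet_le_left (x y : M) : H.le (H.meet x y) x :=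
  H.mul_le_right (H.imp x y) x

lemma meet_le_right (x y : M) : H.le (H.meet x y) y := by
  show H.le (H.mul (H.imp x y) x) y
  exact H.res_imp.mpr (H.le_refl' (H.imp x y))

lemma le_meet {c x y : M} (hx : H.le c x) (hy : H.le c y) : H.le c (H.meet x y) := by
  have hx' : H.imp c x = H.one := hx
  have hc : H.mul (H.imp x c) x = c := by rw [← H.div1, hx', H.one_mul]
  have h1 : H.le (H.imp x c) (H.imp x y) := by
    rw [← H.res_imp, hc]
    exact hy
  have h2 := H.mono_left (y := x) h1
  rw [hc] at h2
  exact h2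

lemma mul_assoc' (a b c : M) : H.mul (H.mul a b) c = H.mul a (H.mul b c) := by
  have key : ∀ z, H.imp (H.mul (H.mul a b) c) z = H.imp (H.mul a (H.mul b c)) z := by
    intro z
    rw [H.mul_imp, H.mul_imp, H.mul_imp, H.mul_imp]
  apply H.antisymm'
  · show H.imp (H.mul (H.mul a b) c) (H.mul a (H.mul b c)) = H.one
    rw [key]
    exact H.imp_self _
  · show H.imp (H.mul a (H.mul b c)) (H.mul (H.mul a b) c) = H.one
    rw [← key]
    exact H.imp_self _

lemma pow_zero' (a : M) : H.pow a 0 = H.one := rfl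

lemma pow_succ' (a : M) (n : ℕ) : H.pow a (n + 1) = H.mul (H.pow a n) a := rfl

lemma pow_one'' (a : M) : H.pow a 1 = a := by
  rw [H.pow_succ', H.pow_zero', H.one_mul]

lemma pow_add' (a : M) (n m : ℕ) :
    H.pow a (n + m) = H.mul (H.pow a n) (H.pow a m) := by
  induction m with
  | zero => rw [Nat.add_zero, H.pow_zero', H.mul_one]
  | succ m ih => rw [← Nat.add_assoc, H.pow_succ', ih, H.pow_succ', H.mul_assoc']

lemma basic_join (hB : H.Basic) (f g : M) {c : M}
    (h1 : H.le (H.imp f g) c) (h2 : H.le (H.imp g f) c) : c = H.one := by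
  have hb' : H.imp (H.imp (H.imp f g) c) (H.imp (H.imp (H.imp g f) c) c) = H.one :=
    hB.1 f g c
  have h1' : H.imp (H.imp f g) c = H.one := h1
  have h2' : H.imp (H.imp g f) c = H.one := h2
  rw [h1', h2', H.one_imp, H.one_imp] at hb'
  exact hb'

lemma join_pow_aux {a b : M}
    (hJ : ∀ c, H.le a c → H.le b c → c = H.one) :
    ∀ m c, H.le a c → H.le (H.pow b m) c → c = H.one := by
  intro m
  induction m with
  | zero =>
    intro c _ h2
    have h2' : H.imp H.one c = H.one := h2
    rwa [H.one_imp] at h2'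
  | succ m ih =>
    intro c h1 h2
    have h2'' : H.le (H.mul (H.pow b m) b) c := h2
    have h2' : H.le (H.pow b m) (H.imp b c) := H.res_imp.mp h2''
    have hc : H.le c (H.imp b c) := H.res_imp.mp (H.mul_le_left c b)
    have h1' : H.le a (H.imp b c) := H.le_trans' h1 hc
    have hbc : H.imp b c = H.one := ih (H.imp b c) h1' h2'
    have hb : H.le b c := hbc
    exact hJ c h1 hb

lemma join_pow {a b : M}
    (hJ : ∀ c, H.le a c → H.le b c → c = H.one) (m : ℕ) :
    ∀ n c, H.le (H.pow a n) c → H.le (H.pow b m) c → c = H.one := by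
  intro n
  induction n with
  | zero =>
    intro c h1 _
    have h1' : H.imp H.one c = H.one := h1
    rwa [H.one_imp] at h1'
  | succ n ih =>
    intro c h1 h2
    have h1'' : H.le (H.mul (H.pow a n) a) c := h1
    have h1' : H.le (H.pow a n) (H.imp a c) := H.res_imp.mp h1''
    have hc : H.le c (H.imp a c) := H.res_imp.mp (H.mul_le_left c a)
    have h2' : H.le (H.pow b m) (H.imp a c) := H.le_trans' h2 hc
    have hac : H.imp a c = H.one := ih (H.imp a c) h1' h2'
    have ha : H.le a c := hac
    exact H.join_pow_aux hJ m c ha h2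

end PseudoHoop

theorem basicPseudoHoop_prime_iff_imp {M : Type u} (H : PseudoHoop M)
    (hB : H.Basic) (F : Set M) (hF : H.IsFilter F) :
    (∀ F₁ F₂ : Set M, H.IsFilter F₁ → H.IsFilter F₂ → F₁ ∩ F₂ ⊆ F → F₁ ⊆ F ∨ F₂ ⊆ F) ↔
      (∀ f g : M, H.imp f g ∈ F ∨ H.imp g f ∈ F) := by
  constructor
  · intro hprime f g
    have hfil : ∀ a : M, H.IsFilter {x | ∃ n, H.le (H.pow a n) x} := by
      intro a
      refine ⟨⟨0, H.le_refl' H.one⟩, ?_, ?_⟩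
      · rintro x ⟨n, hn⟩ y ⟨m, hm⟩
        refine ⟨n + m, ?_⟩
        rw [H.pow_add']
        exact H.le_trans' (H.mono_left hn) (H.mono_right hm)
      · rintro x ⟨n, hn⟩ y hxy
        exact ⟨n, H.le_trans' hn hxy⟩
    rcases hprime {x | ∃ n, H.le (H.pow (H.imp f g) n) x}
        {x | ∃ n, H.le (H.pow (H.imp g f) n) x} (hfil _) (hfil _)
        (by
          rintro x ⟨⟨n, hn⟩, ⟨m, hm⟩⟩
          have hx1 : x = H.one :=
            H.join_pow (fun c hc1 hc2 => H.basic_join hB f g hc1 hc2) m n x hn hm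
          rw [hx1]
          exact hF.1) with h | h
    · left
      apply h
      refine ⟨1, ?_⟩
      rw [H.pow_one'']
      exact H.le_refl' _
    · right
      apply h
      refine ⟨1, ?_⟩
      rw [H.pow_one'']
      exact H.le_refl' _
  · intro hcond F₁ F₂ h1 h2 hsub
    by_contra hcon
    push_neg at hcon
    obtain ⟨hn1, hn2⟩ := hcon
    rw [Set.not_subset] at hn1 hn2
    obtain ⟨p, hp1, hpF⟩ := hn1
    obtain ⟨q, hq2, hqF⟩ := hn2
    have hp_le1 : H.le p (H.rimp (H.imp p q) q) := by
      have : H.le (H.mul (H.imp p q) p) q := H.meet_le_right p q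
      exact H.res_rimp.mp this
    have hp_le2 : H.le p (H.rimp (H.imp q p) p) :=
      H.res_rimp.mp (H.mul_le_right (H.imp q p) p)
    have hq_le1 : H.le q (H.rimp (H.imp p q) q) :=
      H.res_rimp.mp (H.mul_le_right (H.imp p q) q)
    have hq_le2 : H.le q (H.rimp (H.imp q p) p) := by
      have : H.le (H.mul (H.imp q p) q) p := H.meet_le_right q p
      exact H.res_rimp.mp this
    have hpu : H.le p (H.meet (H.rimp (H.imp p q) q) (H.rimp (H.imp q p) p)) :=
      H.le_meet hp_le1 hp_le2
    have hqu : H.le q (H.meet (H.rimp (H.imp p q) q) (H.rimp (H.imp q p) p)) :=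
      H.le_meet hq_le1 hq_le2
    have hu1 : H.meet (H.rimp (H.imp p q) q) (H.rimp (H.imp q p) p) ∈ F₁ :=
      h1.2.2 p hp1 _ hpu
    have hu2 : H.meet (H.rimp (H.imp p q) q) (H.rimp (H.imp q p) p) ∈ F₂ :=
      h2.2.2 q hq2 _ hqu
    have huF : H.meet (H.rimp (H.imp p q) q) (H.rimp (H.imp q p) p) ∈ F :=
      hsub ⟨hu1, hu2⟩
    rcases hcond p q with hc | hc
    · have h3 : H.rimp (H.imp p q) q ∈ F :=
        hF.2.2 _ huF _ (H.meet_le_left _ _)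
      have h4 : H.mul (H.imp p q) (H.rimp (H.imp p q) q) ∈ F := hF.2.1 _ hc _ h3
      have h5 : H.le (H.mul (H.imp p q) (H.rimp (H.imp p q) q)) q := by
        rw [H.res_rimp]
        exact H.le_refl' _
      exact hqF (hF.2.2 _ h4 q h5)
    · have h3 : H.rimp (H.imp q p) p ∈ F :=
        hF.2.2 _ huF _ (H.meet_le_right _ _)
      have h4 : H.mul (H.imp q p) (H.rimp (H.imp q p) p) ∈ F := hF.2.1 _ hc _ h3
      have h5 : H.le (H.mul (H.imp q p) (H.rimp (H.imp q p) p)) p := by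
        rw [H.res_rimp]
        exact H.le_refl' _
      exact hpF (hF.2.2 _ h4 p h5)
end

section
/- Let M be a basic pseudo hoop satisfying (x → y) ⇝ y = (x ⇝ y) → y for all x, y. Then for all n ∈ ℕ and all x, y: (x → y)ⁿ ⇝ y = (x ⇝ y)ⁿ → y. -/
universe u

section Aux

variable {M : Type u} (H : PseudoHoop M)

lemma ph_imp_imp_one (x y : M) : H.imp (H.imp x y) H.one = H.one := by
  calc H.imp (H.imp x y) H.one
      = H.imp (H.imp x y) (H.imp x x) := by rw [H.imp_self]
    _ = H.imp (H.mul (H.imp x y) x) x := by rw [H.mul_imp]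
    _ = H.imp (H.mul (H.imp y x) y) x := by rw [H.div1]
    _ = H.imp (H.imp y x) (H.imp y x) := by rw [H.mul_imp]
    _ = H.one := H.imp_self _

lemma ph_rimp_rimp_one (x y : M) : H.rimp (H.rimp x y) H.one = H.one := by
  calc H.rimp (H.rimp x y) H.one
      = H.rimp (H.rimp x y) (H.rimp x x) := by rw [H.rimp_self]
    _ = H.rimp (H.mul x (H.rimp x y)) x := by rw [H.mul_rimp]
    _ = H.rimp (H.mul y (H.rimp y x)) x := by rw [H.div3]
    _ = H.rimp (H.rimp y x) (H.rimp y x) := by rw [H.mul_rimp]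
    _ = H.one := H.rimp_self _

lemma ph_antisymm (a b : M) (h1 : H.imp a b = H.one) (h2 : H.imp b a = H.one) :
    a = b := by
  have := H.div1 a b
  rw [h1, h2, H.one_mul, H.one_mul] at this
  exact this

lemma ph_antisymm' (a b : M) (h1 : H.rimp a b = H.one) (h2 : H.rimp b a = H.one) :
    a = b := by
  have := H.div3 a b
  rw [h1, h2, H.mul_one, H.mul_one] at this
  exact this

lemma ph_one_imp (y : M) : H.imp H.one y = y := by
  apply ph_antisymm H
  · have h := H.div1 H.one y
    rw [H.mul_one] at h
    rw [h, H.mul_imp, H.imp_self, ph_imp_imp_one]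
  · have := H.mul_imp y H.one y
    rw [H.mul_one, H.imp_self] at this
    exact this.symm

lemma ph_imp_one (x : M) : H.imp x H.one = H.one := by
  rw [← ph_one_imp H x, ph_imp_imp_one]

lemma ph_one_rimp (y : M) : H.rimp H.one y = y := by
  apply ph_antisymm' H
  · have h := H.div3 H.one y
    rw [H.one_mul] at h
    rw [h, H.mul_rimp, H.rimp_self, ph_rimp_rimp_one]
  · have := H.mul_rimp H.one y y
    rw [H.one_mul, H.rimp_self] at this
    exact this.symm

lemma ph_imp_of_rimp (a b : M) (h : H.rimp a b = H.one) : H.imp a b = H.one := by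
  have ha : H.mul (H.imp a b) a = a := by rw [H.div2, h, H.mul_one]
  have := H.mul_imp (H.imp a b) a b
  rw [ha, H.imp_self] at this
  exact this

lemma ph_rimp_of_imp (a b : M) (h : H.imp a b = H.one) : H.rimp a b = H.one := by
  have ha : H.mul a (H.rimp a b) = a := by rw [← H.div2, h, H.one_mul]
  have := H.mul_rimp a (H.rimp a b) b
  rw [ha, H.rimp_self] at this
  exact this

lemma ph_ext (a b : M) (h : ∀ z, H.imp a z = H.imp b z) : a = b := by
  apply ph_antisymm H
  · rw [h, H.imp_self]
  · rw [← h, H.imp_self]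

lemma ph_assoc (x y z : M) : H.mul (H.mul x y) z = H.mul x (H.mul y z) := by
  apply ph_ext H
  intro w
  rw [H.mul_imp, H.mul_imp, H.mul_imp, H.mul_imp]

lemma ph_exchange (a b c : M) :
    H.rimp a (H.imp b c) = H.imp b (H.rimp a c) := by
  set L := H.rimp a (H.imp b c) with hL
  set R := H.imp b (H.rimp a c) with hR
  have hLR : H.imp L R = H.one := by
    have h1 : H.rimp (H.mul a L) (H.imp b c) = H.one := by
      rw [H.mul_rimp, ← hL, H.rimp_self]
    have h2 : H.imp (H.mul a L) (H.imp b c) = H.one := ph_imp_of_rimp H _ _ h1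
    have h3 : H.imp (H.mul (H.mul a L) b) c = H.one := by
      rw [H.mul_imp]; exact h2
    have h4 : H.rimp (H.mul (H.mul a L) b) c = H.one := ph_rimp_of_imp H _ _ h3
    have h5 : H.rimp (H.mul L b) (H.rimp a c) = H.one := by
      rw [← H.mul_rimp, ← ph_assoc]; exact h4
    have h6 : H.imp (H.mul L b) (H.rimp a c) = H.one := ph_imp_of_rimp H _ _ h5
    rw [hR, ← H.mul_imp]; exact h6
  have hRL : H.rimp R L = H.one := by
    have h1 : H.imp (H.mul R b) (H.rimp a c) = H.one := by
      rw [H.mul_imp, ← hR, H.imp_self]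
    have h2 : H.rimp (H.mul R b) (H.rimp a c) = H.one := ph_rimp_of_imp H _ _ h1
    have h3 : H.rimp (H.mul a (H.mul R b)) c = H.one := by
      rw [H.mul_rimp]; exact h2
    have h4 : H.imp (H.mul (H.mul a R) b) c = H.one := by
      apply ph_imp_of_rimp H
      rw [ph_assoc]; exact h3
    have h5 : H.imp (H.mul a R) (H.imp b c) = H.one := by
      rw [← H.mul_imp]; exact h4
    have h6 : H.rimp (H.mul a R) (H.imp b c) = H.one := ph_rimp_of_imp H _ _ h5
    rw [hL, ← H.mul_rimp]; exact h6
  exact ph_antisymm' H _ _ (ph_rimp_of_imp H _ _ hLR) hRL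

end Aux

theorem basicPseudoHoop_power_identity {M : Type u} (H : PseudoHoop M)
    (hB : H.Basic)
    (hid : ∀ x y : M, H.rimp (H.imp x y) y = H.imp (H.rimp x y) y) :
    ∀ (n : ℕ) (x y : M),
      H.rimp (H.pow (H.imp x y) n) y = H.imp (H.pow (H.rimp x y) n) y := by
  intro n
  induction n with
  | zero =>
    intro x y
    show H.rimp H.one y = H.imp H.one y
    rw [ph_one_rimp, ph_one_imp]
  | succ n ih =>
    intro x y
    show H.rimp (H.mul (H.pow (H.imp x y) n) (H.imp x y)) y
        = H.imp (H.mul (H.pow (H.rimp x y) n) (H.rimp x y)) y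
    rw [H.mul_rimp, ih x y, ph_exchange, hid, H.mul_imp]
end
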